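/- arXiv:1406.3946 — 2 statements merged into one kernel-verified Lean document; each statement's English description precedes it below -/
import Mathlib

section
/- Let X be a complex Hilbert space and A ∈ L(X) generate a strongly stable discrete semigroup (A^n x → 0 for all x). Then every spectral point of A on the unit circle belongs to the continuous spectrum: σ(A) ∩ 𝕋 ⊆ σ_c(A). -/
open Filter Topology

open scoped InnerProduct

/-!
If `A x = z • x` with `‖z‖ = 1`, the orbit `A ^ n x` has constant norm, so strong stability forces
`x = 0`: `z • 1 - A` is injective. If `x` is orthogonal to the range of `z • 1 - A`, then
`A† x = conj z • x`, so `‖⟪x, A ^ n x⟫‖ = ‖x‖ ^ 2` for all `n`; this tends to `0`, so the range is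
dense. A bijective bounded operator on a Banach space is invertible, so `z ∈ σ(A)` rules out
surjectivity.
-/

namespace ContinuousLinearMap

variable {𝕜 E : Type*}

lemma pow_apply_of_apply_eq_smul [Semiring 𝕜] [TopologicalSpace E] [AddCommMonoid E]
    [Module 𝕜 E] {A : E →L[𝕜] E} {c : 𝕜} {x : E} (hx : A x = c • x) (n : ℕ) :
    (A ^ n) x = c ^ n • x := by
  induction n with
  | zero => simp
  | succ n ih => rw [pow_succ', mul_apply_eq_comp, ih, map_smul, hx, smul_smul, ← pow_succ]

lemma eq_zero_of_apply_eq_smul_of_tendsto [NormedDivisionRing 𝕜] [NormedAddCommGroup E]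
    [Module 𝕜 E] [NormSMulClass 𝕜 E] {A : E →L[𝕜] E} {c : 𝕜} {x : E} (hc : ‖c‖ = 1)
    (hx : A x = c • x) (hA : Tendsto (fun n : ℕ => ‖(A ^ n) x‖) atTop (𝓝 0)) : x = 0 := by
  have horbit : ∀ n : ℕ, ‖(A ^ n) x‖ = ‖x‖ := fun n => by
    rw [pow_apply_of_apply_eq_smul hx, norm_smul, norm_pow, hc, one_pow, one_mul]
  simp only [horbit] at hA
  exact norm_eq_zero.mp (tendsto_nhds_unique tendsto_const_nhds hA)

lemma injective_smul_one_sub_of_tendsto [NormedField 𝕜] [NormedAddCommGroup E]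
    [NormedSpace 𝕜 E] {A : E →L[𝕜] E} {c : 𝕜} (hc : ‖c‖ = 1)
    (hA : ∀ x, Tendsto (fun n : ℕ => ‖(A ^ n) x‖) atTop (𝓝 0)) :
    Function.Injective (c • (1 : E →L[𝕜] E) - A) := by
  refine (injective_iff_map_eq_zero _).mpr fun x hx => ?_
  rw [sub_apply, smul_apply, one_apply_eq_self, sub_eq_zero] at hx
  exact eq_zero_of_apply_eq_smul_of_tendsto hc hx.symm (hA x)

section InnerProductSpace

variable [RCLike 𝕜] [NormedAddCommGroup E] [InnerProductSpace 𝕜 E] [CompleteSpace E]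

lemma eq_zero_of_adjoint_apply_eq_smul_of_tendsto {A : E →L[𝕜] E} {c : 𝕜} {x : E}
    (hc : ‖c‖ = 1) (hx : (A†) x = c • x)
    (hA : Tendsto (fun n : ℕ => ‖(A ^ n) x‖) atTop (𝓝 0)) : x = 0 := by
  have hinner : ∀ n : ℕ, ‖x‖ ^ 2 = ‖inner 𝕜 x ((A ^ n) x)‖ := fun n => by
    rw [← adjoint_inner_left, ← star_eq_adjoint, star_pow, star_eq_adjoint,
      pow_apply_of_apply_eq_smul hx, inner_smul_left, norm_mul, RCLike.norm_conj, norm_pow, hc,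
      one_pow, one_mul, inner_self_eq_norm_sq_to_K, norm_pow, RCLike.norm_ofReal, abs_norm]
  have hsq : Tendsto (fun _ : ℕ => ‖x‖ ^ 2) atTop (𝓝 0) := by
    refine squeeze_zero (fun _ => by positivity) (fun n => (hinner n).le.trans ?_)
      (by simpa only [mul_zero] using hA.const_mul ‖x‖)
    exact norm_inner_le_norm x _
  exact norm_eq_zero.mp (pow_eq_zero_iff two_ne_zero |>.mp
    (tendsto_nhds_unique tendsto_const_nhds hsq))

lemma denseRange_smul_one_sub_of_tendsto {A : E →L[𝕜] E} {c : 𝕜} (hc : ‖c‖ = 1)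
    (hA : ∀ x, Tendsto (fun n : ℕ => ‖(A ^ n) x‖) atTop (𝓝 0)) :
    DenseRange (c • (1 : E →L[𝕜] E) - A) := by
  have horth : (c • (1 : E →L[𝕜] E) - A).rangeᗮ = ⊥ := by
    refine (Submodule.eq_bot_iff _).mpr fun x hx => ?_
    rw [orthogonal_range, LinearMap.mem_ker, coe_coe] at hx
    rw [← star_eq_adjoint, star_sub, star_smul, star_one, star_eq_adjoint, sub_apply, smul_apply,
      one_apply_eq_self, sub_eq_zero] at hx
    exact eq_zero_of_adjoint_apply_eq_smul_of_tendsto (by rwa [norm_star]) hx.symm (hA x)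
  have := Submodule.dense_iff_topologicalClosure_eq_top.mpr
    (Submodule.topologicalClosure_eq_top_iff.mpr horth)
  simpa only [DenseRange, LinearMap.coe_range, coe_coe] using this

end InnerProductSpace

lemma not_surjective_smul_one_sub_of_mem_spectrum [NontriviallyNormedField 𝕜]
    [NormedAddCommGroup E] [NormedSpace 𝕜 E] [CompleteSpace E] {A : E →L[𝕜] E} {c : 𝕜}
    (hc : c ∈ spectrum 𝕜 A) (hinj : Function.Injective (c • (1 : E →L[𝕜] E) - A)) :
    ¬ Function.Surjective (c • (1 : E →L[𝕜] E) - A) := fun hsurj =>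
  spectrum.mem_iff.mp hc <| by
    rw [Algebra.algebraMap_eq_smul_one]
    exact isUnit_iff_bijective.mpr ⟨hinj, hsurj⟩

end ContinuousLinearMap

/-- For a strongly stable operator on a Hilbert space, every spectral point on the
unit circle belongs to the continuous spectrum. -/
theorem stmt4 {X : Type*} [NormedAddCommGroup X] [InnerProductSpace ℂ X] [CompleteSpace X]
    (A : X →L[ℂ] X)
    (hstab : ∀ x : X, Tendsto (fun n : ℕ => ‖(A ^ n) x‖) atTop (𝓝 0)) :
    ∀ z : ℂ, ‖z‖ = 1 → z ∈ spectrum ℂ A →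
      Function.Injective ⇑(z • (1 : X →L[ℂ] X) - A) ∧
      Dense (Set.range ⇑(z • (1 : X →L[ℂ] X) - A)) ∧
      ¬ Function.Surjective ⇑(z • (1 : X →L[ℂ] X) - A) := by
  intro z hz hspec
  have hinj := A.injective_smul_one_sub_of_tendsto hz hstab
  exact ⟨hinj, A.denseRange_smul_one_sub_of_tendsto hz hstab,
    A.not_surjective_smul_one_sub_of_mem_spectrum hspec hinj⟩
end

section
/- Let X be a complex Banach space, A ∈ L(X) power bounded with M = sup_n ‖A^n‖, and suppose that for some φ_k ∈ ℝ, α ≥ 1, M_A ≥ 1, and ε_A ∈ (0, π/8], we have e^{iφ} ∈ ρ(A) and |φ - φ_k|^α ‖R(e^{iφ},A)‖ ≤ M_A whenever 0 < |φ - φ_k| ≤ ε_A. Then for every λ = re^{iφ} with 1 ≤ r ≤ 2, 0 < |φ - φ_k| ≤ ε_A (and λ ≠ e^{iφ_k}), λ ∈ ρ(A) and |λ - e^{iφ_k}|^α ‖R(λ,A)‖ ≤ 2^α (M + M_A(1 + M)). -/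
/-!
For `λ = r e^{iφ}` with `1 < r ≤ 2` the Neumann series of the power-bounded `A` gives
`λ ∈ ρ(A)` with the Kreiss bound `(r - 1) ‖R(λ, A)‖ ≤ M`, and the resolvent identity
`R(λ, A) = R(e^{iφ}, A) (1 - (λ - e^{iφ}) R(λ, A))` then gives
`‖R(λ, A)‖ ≤ (1 + M) ‖R(e^{iφ}, A)‖`. Since `|λ - e^{iφ_k}| ≤ (r - 1) + |φ - φ_k|` and
`(s + t)^α ≤ 2^α (s + t^α)` for `0 ≤ s ≤ 1`, the `r - 1` part is absorbed by the Kreiss bound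
and the `|φ - φ_k|^α` part by the hypothesis on the circle. For `r = 1` the hypothesis applies
directly.
-/

open Complex

theorem norm_exp_mul_I_sub_exp_mul_I_le (x y : ℝ) :
    ‖exp (x * I) - exp (y * I)‖ ≤ |x - y| := by
  have hsplit : exp (x * I) - exp (y * I) = exp (y * I) * (exp (I * ↑(x - y)) - 1) := by
    rw [mul_sub, mul_one, ← Complex.exp_add]; push_cast; ring_nf
  rw [hsplit, norm_mul, norm_exp_ofReal_mul_I, one_mul, ← Real.norm_eq_abs]
  exact Real.norm_exp_I_mul_ofReal_sub_one_le

theorem norm_ofReal_mul_exp_mul_I_sub_exp_mul_I_le {r : ℝ} (hr : 1 ≤ r) (x y : ℝ) :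
    ‖(r : ℂ) * exp (x * I) - exp (y * I)‖ ≤ (r - 1) + |x - y| := by
  have hradial : ‖(r : ℂ) * exp (x * I) - exp (x * I)‖ = r - 1 := by
    rw [← sub_one_mul, norm_mul, norm_exp_ofReal_mul_I, mul_one, ← ofReal_one, ← ofReal_sub,
      norm_real, Real.norm_of_nonneg (sub_nonneg.2 hr)]
  calc ‖(r : ℂ) * exp (x * I) - exp (y * I)‖
      ≤ ‖(r : ℂ) * exp (x * I) - exp (x * I)‖ + ‖exp (x * I) - exp (y * I)‖ :=
        norm_sub_le_norm_sub_add_norm_sub _ _ _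
    _ ≤ (r - 1) + |x - y| := by
        rw [hradial]; gcongr; exact norm_exp_mul_I_sub_exp_mul_I_le x y

theorem add_rpow_le_two_rpow_mul_add_rpow {s t α : ℝ} (hs0 : 0 ≤ s) (hs1 : s ≤ 1) (ht : 0 ≤ t)
    (hα : 1 ≤ α) : (s + t) ^ α ≤ 2 ^ α * (s + t ^ α) := by
  have hs : s ^ α ≤ s := Real.rpow_le_self_of_le_one hs0 hs1 hα
  lift s to NNReal using hs0
  lift t to NNReal using ht
  have hmean := NNReal.rpow_add_le_mul_rpow_add_rpow s t hα
  calc ((s : ℝ) + t) ^ α ≤ 2 ^ (α - 1) * (s ^ α + t ^ α) := by exact_mod_cast hmean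
    _ ≤ 2 ^ α * (s + t ^ α) := by
        gcongr
        · norm_num
        · linarith

theorem eq_sub_mul_sub_mul_of_mul_eq_one {R : Type*} [Ring R] {x y r s : R}
    (hr : r * x = 1) (hs : y * s = 1) : s = r - r * (y - x) * s := by
  calc s = (r * x) * s := by rw [hr, one_mul]
    _ = r * (y * s) - r * (y - x) * s := by noncomm_ring
    _ = r - r * (y - x) * s := by rw [hs, mul_one]

section NormedAlgebra

variable {𝕜 E : Type*} [NormedField 𝕜] [NormedRing E] [NormedAlgebra 𝕜 E]

theorem norm_le_of_resolvent_identity {a r s : E} {μ ν : 𝕜}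
    (hr : r * (μ • 1 - a) = 1) (hs : (ν • 1 - a) * s = 1) :
    ‖s‖ ≤ ‖r‖ * (1 + ‖ν - μ‖ * ‖s‖) := by
  have hdiff : (ν • (1 : E) - a) - (μ • 1 - a) = (ν - μ) • 1 := by rw [sub_smul]; abel
  have hid : s = r - (ν - μ) • (r * s) := by
    rw [← smul_mul_assoc, ← mul_smul_one, ← hdiff]
    exact eq_sub_mul_sub_mul_of_mul_eq_one hr hs
  calc ‖s‖ = ‖r - (ν - μ) • (r * s)‖ := congrArg norm hid
    _ ≤ ‖r‖ + ‖ν - μ‖ * (‖r‖ * ‖s‖) := by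
        grw [norm_sub_le, norm_smul, norm_mul_le]
    _ = ‖r‖ * (1 + ‖ν - μ‖ * ‖s‖) := by ring

variable [CompleteSpace E]

theorem summable_pow_and_norm_tsum_le_of_norm_pow_le {b : E} {M q : ℝ} (hq0 : 0 ≤ q)
    (hq1 : q < 1) (hb : ∀ n : ℕ, ‖b ^ n‖ ≤ M * q ^ n) :
    Summable (b ^ ·) ∧ ‖∑' n : ℕ, b ^ n‖ ≤ M * (1 - q)⁻¹ := by
  have hgeo : Summable fun n : ℕ => M * q ^ n := (summable_geometric_of_lt_one hq0 hq1).mul_left M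
  have hnorm : Summable fun n : ℕ => ‖b ^ n‖ := hgeo.of_nonneg_of_le (fun _ => norm_nonneg _) hb
  refine ⟨hnorm.of_norm, ?_⟩
  calc ‖∑' n : ℕ, b ^ n‖ ≤ ∑' n : ℕ, ‖b ^ n‖ := norm_tsum_le_tsum_norm hnorm
    _ ≤ ∑' n : ℕ, M * q ^ n := hnorm.tsum_le_tsum hb hgeo
    _ = M * (1 - q)⁻¹ := by rw [tsum_mul_left, tsum_geometric_of_lt_one hq0 hq1]

theorem exists_inverse_smul_one_sub_of_norm_pow_le {a : E} {M : ℝ} (hM : ∀ n : ℕ, ‖a ^ n‖ ≤ M)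
    {ν : 𝕜} (hν : 1 < ‖ν‖) :
    ∃ s : E, s * (ν • 1 - a) = 1 ∧ (ν • 1 - a) * s = 1 ∧ (‖ν‖ - 1) * ‖s‖ ≤ M := by
  have hν0 : ν ≠ 0 := norm_pos_iff.1 (one_pos.trans hν)
  have hq1 : ‖ν‖⁻¹ < 1 := inv_lt_one_of_one_lt₀ hν
  have hpow : ∀ n : ℕ, ‖(ν⁻¹ • a) ^ n‖ ≤ M * ‖ν‖⁻¹ ^ n := fun n => by
    rw [smul_pow, norm_smul, norm_pow, norm_inv, mul_comm]
    gcongr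
    exact hM n
  obtain ⟨hsum, hbound⟩ := summable_pow_and_norm_tsum_le_of_norm_pow_le (by positivity) hq1 hpow
  have hfactor : ν • (1 : E) - a = ν • (1 - ν⁻¹ • a) := by
    rw [smul_sub, smul_smul, mul_inv_cancel₀ hν0, one_smul]
  refine ⟨ν⁻¹ • ∑' n : ℕ, (ν⁻¹ • a) ^ n, ?_, ?_, ?_⟩
  · rw [hfactor, smul_mul_smul_comm, inv_mul_cancel₀ hν0, one_smul, hsum.tsum_pow_mul_one_sub]
  · rw [hfactor, smul_mul_smul_comm, mul_inv_cancel₀ hν0, one_smul, hsum.one_sub_mul_tsum_pow]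
  · have hpos : 0 < ‖ν‖ - 1 := sub_pos.2 hν
    calc (‖ν‖ - 1) * ‖ν⁻¹ • ∑' n : ℕ, (ν⁻¹ • a) ^ n‖
        ≤ (‖ν‖ - 1) * (‖ν‖⁻¹ * (M * (1 - ‖ν‖⁻¹)⁻¹)) := by
          rw [norm_smul, norm_inv]; gcongr
      _ = M := by field_simp

theorem exists_inverse_of_norm_sub_le {a : E} {M : ℝ} (hM : ∀ n : ℕ, ‖a ^ n‖ ≤ M)
    {μ ν : 𝕜} (hν : 1 ≤ ‖ν‖) (hνμ : ‖ν - μ‖ ≤ ‖ν‖ - 1) {r : E}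
    (hr : r * (μ • 1 - a) = 1) (hr' : (μ • 1 - a) * r = 1) :
    ∃ s : E, s * (ν • 1 - a) = 1 ∧ (ν • 1 - a) * s = 1 ∧
      (‖ν‖ - 1) * ‖s‖ ≤ M ∧ ‖s‖ ≤ ‖r‖ * (1 + M) := by
  have hM0 : 0 ≤ M := (norm_nonneg _).trans (hM 0)
  rcases hν.eq_or_lt with hν1 | hν1
  · obtain rfl : ν = μ := sub_eq_zero.1 (norm_le_zero_iff.1 (by linarith))
    refine ⟨r, hr, hr', by rw [← hν1, sub_self, zero_mul]; exact hM0, ?_⟩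
    nlinarith [norm_nonneg r]
  · obtain ⟨s, hs, hs', hkreiss⟩ := exists_inverse_smul_one_sub_of_norm_pow_le hM hν1
    refine ⟨s, hs, hs', hkreiss, ?_⟩
    calc ‖s‖ ≤ ‖r‖ * (1 + ‖ν - μ‖ * ‖s‖) := norm_le_of_resolvent_identity hr hs'
      _ ≤ ‖r‖ * (1 + M) := by
          gcongr
          exact (mul_le_mul_of_nonneg_right hνμ (norm_nonneg s)).trans hkreiss

end NormedAlgebra

theorem stmt11_general {X : Type*} [NormedAddCommGroup X] [NormedSpace ℂ X] [CompleteSpace X]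
    (A : X →L[ℂ] X) (M : ℝ) (hM : ∀ n : ℕ, ‖A ^ n‖ ≤ M)
    (φk α MA εA : ℝ) (hα : 1 ≤ α)
    (hres : ∀ φ : ℝ, 0 < |φ - φk| → |φ - φk| ≤ εA →
      ∃ R : X →L[ℂ] X,
        R * (Complex.exp ((φ : ℂ) * Complex.I) • (1 : X →L[ℂ] X) - A) = 1 ∧
        (Complex.exp ((φ : ℂ) * Complex.I) • (1 : X →L[ℂ] X) - A) * R = 1 ∧
        |φ - φk| ^ α * ‖R‖ ≤ MA) :
    ∀ r φ : ℝ, 1 ≤ r → r ≤ 2 → 0 < |φ - φk| → |φ - φk| ≤ εA →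
      (r : ℂ) * Complex.exp ((φ : ℂ) * Complex.I) ≠ Complex.exp ((φk : ℂ) * Complex.I) →
      ∃ R : X →L[ℂ] X,
        R * (((r : ℂ) * Complex.exp ((φ : ℂ) * Complex.I)) • (1 : X →L[ℂ] X) - A) = 1 ∧
        (((r : ℂ) * Complex.exp ((φ : ℂ) * Complex.I)) • (1 : X →L[ℂ] X) - A) * R = 1 ∧
        ‖(r : ℂ) * Complex.exp ((φ : ℂ) * Complex.I)
            - Complex.exp ((φk : ℂ) * Complex.I)‖ ^ α * ‖R‖
          ≤ 2 ^ α * (M + MA * (1 + M)) := by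
  intro r φ hr1 hr2 hφ hφε _
  set t := |φ - φk|
  obtain ⟨Rμ, hRμ, hRμ', hMA⟩ := hres φ hφ hφε
  have hM0 : 0 ≤ M := (norm_nonneg _).trans (hM 0)
  have hnorm : ‖(r : ℂ) * exp (φ * I)‖ = r := by
    rw [norm_mul, norm_exp_ofReal_mul_I, mul_one, norm_real, Real.norm_of_nonneg (by linarith)]
  have hradial : ‖(r : ℂ) * exp (φ * I) - exp (φ * I)‖ ≤ ‖(r : ℂ) * exp (φ * I)‖ - 1 := by
    rw [hnorm]; simpa using norm_ofReal_mul_exp_mul_I_sub_exp_mul_I_le hr1 φ φ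
  obtain ⟨R, hR, hR', hkreiss, hRRμ⟩ :=
    exists_inverse_of_norm_sub_le hM (by rw [hnorm]; exact hr1) hradial hRμ hRμ'
  rw [hnorm] at hkreiss
  refine ⟨R, hR, hR', ?_⟩
  calc ‖(r : ℂ) * exp (φ * I) - exp (φk * I)‖ ^ α * ‖R‖
      ≤ ((r - 1) + t) ^ α * ‖R‖ := by
        gcongr; exact norm_ofReal_mul_exp_mul_I_sub_exp_mul_I_le hr1 φ φk
    _ ≤ 2 ^ α * ((r - 1) + t ^ α) * ‖R‖ := by
        gcongr; exact add_rpow_le_two_rpow_mul_add_rpow (by linarith) (by linarith) hφ.le hα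
    _ = 2 ^ α * ((r - 1) * ‖R‖ + t ^ α * ‖R‖) := by ring
    _ ≤ 2 ^ α * (M + MA * (1 + M)) := by
        refine mul_le_mul_of_nonneg_left (add_le_add hkreiss ?_) (by positivity)
        calc t ^ α * ‖R‖ ≤ t ^ α * (‖Rμ‖ * (1 + M)) := by gcongr
          _ = t ^ α * ‖Rμ‖ * (1 + M) := by ring
          _ ≤ MA * (1 + M) := by gcongr

/-- Polynomial resolvent bound extends from the unit circle into the annulus 1 ≤ r ≤ 2. -/
theorem stmt11 {X : Type*} [NormedAddCommGroup X] [NormedSpace ℂ X] [CompleteSpace X]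
    (A : X →L[ℂ] X) (M : ℝ) (hM0 : 0 ≤ M) (hM : ∀ n : ℕ, ‖A ^ n‖ ≤ M)
    (φk α MA εA : ℝ) (hα : 1 ≤ α) (hMA : 1 ≤ MA) (hεA0 : 0 < εA) (hεA : εA ≤ Real.pi / 8)
    (hres : ∀ φ : ℝ, 0 < |φ - φk| → |φ - φk| ≤ εA →
      ∃ R : X →L[ℂ] X,
        R * (Complex.exp ((φ : ℂ) * Complex.I) • (1 : X →L[ℂ] X) - A) = 1 ∧
        (Complex.exp ((φ : ℂ) * Complex.I) • (1 : X →L[ℂ] X) - A) * R = 1 ∧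
        |φ - φk| ^ α * ‖R‖ ≤ MA) :
    ∀ r φ : ℝ, 1 ≤ r → r ≤ 2 → 0 < |φ - φk| → |φ - φk| ≤ εA →
      (r : ℂ) * Complex.exp ((φ : ℂ) * Complex.I) ≠ Complex.exp ((φk : ℂ) * Complex.I) →
      ∃ R : X →L[ℂ] X,
        R * (((r : ℂ) * Complex.exp ((φ : ℂ) * Complex.I)) • (1 : X →L[ℂ] X) - A) = 1 ∧
        (((r : ℂ) * Complex.exp ((φ : ℂ) * Complex.I)) • (1 : X →L[ℂ] X) - A) * R = 1 ∧
        ‖(r : ℂ) * Complex.exp ((φ : ℂ) * Complex.I)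
            - Complex.exp ((φk : ℂ) * Complex.I)‖ ^ α * ‖R‖
          ≤ 2 ^ α * (M + MA * (1 + M)) :=
  stmt11_general A M hM φk α MA εA hα hres
end
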